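/- Inductive normalization step: let α₁,…,αₙ ∈ ℂ be linearly independent over ℚ, let k ≥ 3 be odd, let P ∈ ℂ[X₁,…,Xₙ] be a polynomial whose linear part is Σᵢ αᵢXᵢ, and let H ∈ ℂ[[q,p]] satisfy H = P(q₁p₁,…,qₙpₙ) + o(k). Then there exist f ∈ ℂ[[q,p]] of order ≥ k+1 and a homogeneous polynomial B ∈ ℂ[X₁,…,Xₙ] of degree (k+1)/2 such that e^{ad_f}(H) = (P+B)(q₁p₁,…,qₙpₙ) + o(k+2), where e^{ad_f}(H) = Σ_{j≥0}(1/j!)·ad_f^j(H) and ad_f(F) = {F, f}. -/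

import Mathlib

/- ℂ[[q,p]] is `MvPowerSeries (Fin n ⊕ Fin n) ℂ`, where `Sum.inl i` is the
variable `qᵢ` and `Sum.inr i` is the variable `pᵢ`. -/

open MvPowerSeries

/-- Partial derivative of a multivariate formal power series. -/
noncomputable def pd {σ : Type} [DecidableEq σ] (x : σ) (f : MvPowerSeries σ ℂ) :
    MvPowerSeries σ ℂ :=
  fun m => ((m x : ℂ) + 1) * coeff (m + Finsupp.single x 1) f

/-- The Poisson bracket `{f,g} = Σᵢ ∂_{qᵢ}f ∂_{pᵢ}g − ∂_{pᵢ}f ∂_{qᵢ}g` on ℂ[[q,p]]. -/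
noncomputable def pois {n : ℕ} (f g : MvPowerSeries (Fin n ⊕ Fin n) ℂ) :
    MvPowerSeries (Fin n ⊕ Fin n) ℂ :=
  ∑ i : Fin n, (pd (Sum.inl i) f * pd (Sum.inr i) g - pd (Sum.inr i) f * pd (Sum.inl i) g)

/-- Total degree of a monomial. -/
def mdeg {σ : Type} (m : σ →₀ ℕ) : ℕ := m.sum fun _ k => k

/-- `f = g + o(l)`: every monomial of `f − g` has total degree > `l`. -/
def OEq {σ : Type} (f g : MvPowerSeries σ ℂ) (l : ℕ) : Prop :=
  ∀ m, mdeg m ≤ l → coeff m (f - g) = 0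

/-- `f` has order ≥ `a`: every monomial of `f` has total degree ≥ `a`. -/
def OrdGe {σ : Type} (f : MvPowerSeries σ ℂ) (a : ℕ) : Prop :=
  ∀ m, mdeg m < a → coeff m f = 0

/-- Iterates of the adjoint operator `ad_f(F) = {F, f}`: `adIter f F k = ad_f^k(F)`. -/
noncomputable def adIter {n : ℕ} (f F : MvPowerSeries (Fin n ⊕ Fin n) ℂ) :
    ℕ → MvPowerSeries (Fin n ⊕ Fin n) ℂ
  | 0 => F
  | k + 1 => pois (adIter f F k) f

/-- The exponential `e^{ad_f}(F) = Σ_{k≥0} (1/k!) ad_f^k(F)`, defined coefficientwise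
(for each monomial only finitely many terms contribute when `f` has order ≥ 3,
so the finite sum `∑ᶠ` computes the genuine sum). -/
noncomputable def expAd {n : ℕ} (f F : MvPowerSeries (Fin n ⊕ Fin n) ℂ) :
    MvPowerSeries (Fin n ⊕ Fin n) ℂ :=
  fun m => ∑ᶠ k : ℕ, ((k.factorial : ℂ))⁻¹ * coeff m (adIter f F k)

/-!
Let `R = H − P(qp)`, of order `≥ k + 1`, and `N₂ = Σ αᵢ qᵢpᵢ`. For `f` of order `≥ k + 1`, since
`H − c − N₂` has order `≥ 4`, up to degree `k + 2` we have `e^{ad_f} H = H + {H, f} = H + {N₂, f}`,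
and `{N₂, ·}` is diagonal on monomials: `{N₂, qᵘpᵛ} = ⟨α, v − u⟩ qᵘpᵛ`. By rational independence of
`α` this eigenvalue vanishes exactly on the resonant monomials `qᵃpᵃ`. Hence `f = −R / eigenvalue`
cancels `R` on the non-resonant monomials, and the resonant part of `R` is kept as `B(qp)`. Since
`k` is odd and resonant monomials have even degree, in degrees `k + 1, k + 2` they occur only in
degree `k + 1`, so `B` is homogeneous of degree `(k + 1) / 2`.
-/

lemma mdeg_eq_degree {σ : Type} (m : σ →₀ ℕ) : mdeg m = m.degree := rfl

section Derivative

variable {σ : Type}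

lemma pd_eq_pderiv [DecidableEq σ] (x : σ) : pd x = pderiv ℂ x := by
  funext f
  ext m
  rw [coeff_pderiv]
  exact mul_comm _ _

lemma coeff_X_mul_pderiv (x : σ) (f : MvPowerSeries σ ℂ) (m : σ →₀ ℕ) :
    coeff m (X x * pderiv ℂ x f) = m x * coeff m f := by
  classical
  rw [X, coeff_monomial_mul]
  split_ifs with h
  · have hx : 1 ≤ m x := by simpa using h x
    rw [coeff_pderiv, tsub_add_cancel_of_le h, Finsupp.tsub_apply, Finsupp.single_eq_same,
      Nat.cast_sub hx]
    ring
  · have hx : m x = 0 := by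
      by_contra hx
      exact h (Finsupp.single_le_iff.mpr (by omega))
    simp [hx]

end Derivative

section Order

variable {σ : Type} {f g : MvPowerSeries σ ℂ} {a b : ℕ}

lemma OrdGe.mono (hf : OrdGe f a) (hba : b ≤ a) : OrdGe f b :=
  fun m hm => hf m (hm.trans_le hba)

lemma OrdGe.add (hf : OrdGe f a) (hg : OrdGe g a) : OrdGe (f + g) a := fun m hm => by
  rw [map_add, hf m hm, hg m hm, add_zero]

lemma OrdGe.mul (hf : OrdGe f a) (hg : OrdGe g b) : OrdGe (f * g) (a + b) := by
  classical
  intro m hm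
  rw [coeff_mul]
  refine Finset.sum_eq_zero fun p hp => ?_
  have hdeg : mdeg p.1 + mdeg p.2 = mdeg m := by
    simp only [mdeg_eq_degree, ← map_add, Finset.HasAntidiagonal.mem_antidiagonal.mp hp]
  rcases lt_or_ge (mdeg p.1) a with h | h
  · rw [hf _ h, zero_mul]
  · rw [hg _ (by omega), mul_zero]

lemma OrdGe.pderiv (hf : OrdGe f a) (x : σ) : OrdGe (pderiv ℂ x f) (a - 1) := by
  intro m hm
  have hdeg : mdeg (m + Finsupp.single x 1) = mdeg m + 1 := by
    rw [mdeg_eq_degree, mdeg_eq_degree, map_add, Finsupp.degree_single]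
  rw [coeff_pderiv, hf _ (by omega), zero_mul]

end Order

section Poisson

variable {n : ℕ}

lemma pois_eq_sum_pderiv (F G : MvPowerSeries (Fin n ⊕ Fin n) ℂ) :
    pois F G = ∑ i, (pderiv ℂ (Sum.inl i) F * pderiv ℂ (Sum.inr i) G -
      pderiv ℂ (Sum.inr i) F * pderiv ℂ (Sum.inl i) G) := by
  simp only [pois, pd_eq_pderiv]

lemma OrdGe.pois {F G : MvPowerSeries (Fin n ⊕ Fin n) ℂ} {a b : ℕ} (hF : OrdGe F a)
    (hG : OrdGe G b) : OrdGe (pois F G) (a + b - 2) := by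
  intro m hm
  rw [pois_eq_sum_pderiv, map_sum]
  refine Finset.sum_eq_zero fun i _ => ?_
  rw [map_sub, ((hF.pderiv _).mul (hG.pderiv _)) m (by omega),
    ((hF.pderiv _).mul (hG.pderiv _)) m (by omega), sub_zero]

lemma pois_add_left (F₁ F₂ G : MvPowerSeries (Fin n ⊕ Fin n) ℂ) :
    pois (F₁ + F₂) G = pois F₁ G + pois F₂ G := by
  simp only [pois_eq_sum_pderiv, map_add, ← Finset.sum_add_distrib]
  congr 1
  ext1 i
  ring

lemma pois_C_add_left (c : ℂ) (F G : MvPowerSeries (Fin n ⊕ Fin n) ℂ) :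
    pois (C c + F) G = pois F G := by
  simp [pois_eq_sum_pderiv]

end Poisson

section Action

variable {σ : Type}

lemma sumElim_self_injective : Function.Injective fun a : σ →₀ ℕ => a.sumElim a := by
  intro a b h
  ext i
  simpa using DFunLike.congr_fun h (Sum.inl i)

lemma degree_sumElim_self (a : σ →₀ ℕ) : (a.sumElim a).degree = 2 * a.degree := by
  rw [Finsupp.sumElim_eq_add, map_add, Finsupp.degree_mapDomain, Finsupp.degree_mapDomain]
  ring

noncomputable def actionVar (i : σ) : MvPowerSeries (σ ⊕ σ) ℂ := X (Sum.inl i) * X (Sum.inr i)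

lemma aeval_actionVar_monomial (a : σ →₀ ℕ) (c : ℂ) :
    MvPolynomial.aeval actionVar (MvPolynomial.monomial a c) = monomial (a.sumElim a) c := by
  classical
  rw [MvPolynomial.aeval_monomial]
  simp only [actionVar, mul_pow, X_pow_eq, monomial_mul_monomial, mul_one, Finsupp.prod]
  rw [prod_monomial, Finset.prod_const_one, MvPowerSeries.algebraMap_apply,
    Algebra.algebraMap_self_apply, ← monomial_zero_eq_C_apply, monomial_mul_monomial, zero_add,
    mul_one]
  congr 2
  ext (i | i) <;> simp [Finsupp.finsetSum_apply, Finsupp.single_apply, eq_comm]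

lemma coeff_sumElim_self_aeval_actionVar (Q : MvPolynomial σ ℂ) (a : σ →₀ ℕ) :
    coeff (a.sumElim a) (MvPolynomial.aeval actionVar Q) = Q.coeff a := by
  classical
  induction Q using MvPolynomial.induction_on' with
  | monomial b c =>
    simp only [aeval_actionVar_monomial, coeff_monomial, MvPolynomial.coeff_monomial,
      sumElim_self_injective.eq_iff, eq_comm]
  | add Q₁ Q₂ h₁ h₂ => rw [map_add, map_add, h₁, h₂, MvPolynomial.coeff_add]

lemma coeff_aeval_actionVar_of_forall_ne (Q : MvPolynomial σ ℂ) {m : σ ⊕ σ →₀ ℕ}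
    (hm : ∀ a : σ →₀ ℕ, a.sumElim a ≠ m) : coeff m (MvPolynomial.aeval actionVar Q) = 0 := by
  classical
  induction Q using MvPolynomial.induction_on' with
  | monomial b c => rw [aeval_actionVar_monomial, coeff_monomial, if_neg (hm b).symm]
  | add Q₁ Q₂ h₁ h₂ => rw [map_add, map_add, h₁, h₂, add_zero]

lemma ordGe_aeval_actionVar {Q : MvPolynomial σ ℂ} {d : ℕ}
    (hQ : ∀ a : σ →₀ ℕ, a.degree < d → Q.coeff a = 0) :
    OrdGe (MvPolynomial.aeval actionVar Q) (2 * d) := by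
  intro m hm
  by_cases hdiag : ∃ a : σ →₀ ℕ, a.sumElim a = m
  · obtain ⟨a, rfl⟩ := hdiag
    rw [mdeg_eq_degree, degree_sumElim_self] at hm
    rw [coeff_sumElim_self_aeval_actionVar]
    exact hQ a (by omega)
  · push Not at hdiag
    exact coeff_aeval_actionVar_of_forall_ne Q hdiag

end Action

section Quadratic

variable {σ : Type} [Fintype σ]

noncomputable def quadraticPart (α : σ → ℂ) : MvPowerSeries (σ ⊕ σ) ℂ :=
  ∑ i, C (α i) * actionVar i

lemma aeval_actionVar_linear (α : σ → ℂ) :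
    MvPolynomial.aeval actionVar (∑ i, MvPolynomial.C (α i) * MvPolynomial.X i) =
      quadraticPart α := by
  simp [quadraticPart, MvPowerSeries.algebraMap_apply]

lemma ordGe_quadraticPart (α : σ → ℂ) : OrdGe (quadraticPart α) 2 := by
  classical
  rw [← aeval_actionVar_linear]
  refine ordGe_aeval_actionVar (d := 1) fun a ha => ?_
  rw [(Finsupp.degree_eq_zero_iff a).mp (by omega)]
  simp [MvPolynomial.coeff_sum, MvPolynomial.coeff_X]

lemma ordGe_aeval_actionVar_sub_quadraticPart {α : σ → ℂ}
    {P : MvPolynomial σ ℂ} (hP : ∀ i, P.coeff (Finsupp.single i 1) = α i) :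
    OrdGe (MvPolynomial.aeval actionVar P - C (P.coeff 0) - quadraticPart α) 4 := by
  classical
  have hC : (C (P.coeff 0) : MvPowerSeries (σ ⊕ σ) ℂ) =
      MvPolynomial.aeval actionVar (MvPolynomial.C (P.coeff 0)) := by
    simp [MvPowerSeries.algebraMap_apply]
  rw [← aeval_actionVar_linear, hC, ← map_sub, ← map_sub]
  refine ordGe_aeval_actionVar (d := 2) fun a ha => ?_
  rcases (by omega : a.degree = 0 ∨ a.degree = 1) with h0 | h1
  · rw [(Finsupp.degree_eq_zero_iff a).mp h0]
    simp [MvPolynomial.coeff_sum, MvPolynomial.coeff_X]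
  · obtain ⟨i, rfl⟩ : a ∈ Set.range fun i => Finsupp.single i 1 := by
      rw [Finsupp.range_single_one]; exact h1
    simp [hP, MvPolynomial.coeff_sum, MvPolynomial.coeff_X, MvPolynomial.coeff_C,
      Finsupp.single_left_inj, eq_comm (a := (0 : σ →₀ ℕ))]

end Quadratic

section Eigenvalue

variable {σ : Type} [Fintype σ]

noncomputable def homologicalEigenvalue (α : σ → ℂ) (m : σ ⊕ σ →₀ ℕ) : ℂ :=
  ∑ i, α i * ((m (Sum.inr i) : ℂ) - m (Sum.inl i))

lemma homologicalEigenvalue_eq_zero_iff {α : σ → ℂ} (hα : LinearIndependent ℚ α)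
    (m : σ ⊕ σ →₀ ℕ) : homologicalEigenvalue α m = 0 ↔ ∃ a : σ →₀ ℕ, a.sumElim a = m := by
  constructor
  · intro h
    have hdiag (i : σ) : m (Sum.inl i) = m (Sum.inr i) := by
      have := Fintype.linearIndependent_iff.mp hα
        (fun i => (m (Sum.inr i) : ℚ) - m (Sum.inl i)) (by
          rw [← h, homologicalEigenvalue]
          refine Finset.sum_congr rfl fun j _ => ?_
          rw [Rat.smul_def]
          push_cast
          ring) i
      exact_mod_cast (sub_eq_zero.mp this).symm
    refine ⟨m.comapDomain Sum.inl Sum.inl_injective.injOn, ?_⟩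
    ext (i | i) <;> simp [hdiag]
  · rintro ⟨a, rfl⟩
    simp [homologicalEigenvalue]

end Eigenvalue

section QuadraticBracket

variable {n : ℕ} (α : Fin n → ℂ)

lemma pderiv_inl_quadraticPart (i : Fin n) :
    pderiv ℂ (Sum.inl i) (quadraticPart α) = C (α i) * X (Sum.inr i) := by
  simp [quadraticPart, actionVar, pderiv_X, Pi.single_apply]

lemma pderiv_inr_quadraticPart (i : Fin n) :
    pderiv ℂ (Sum.inr i) (quadraticPart α) = C (α i) * X (Sum.inl i) := by
  simp [quadraticPart, actionVar, pderiv_X, Pi.single_apply]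

lemma coeff_pois_quadraticPart (f : MvPowerSeries (Fin n ⊕ Fin n) ℂ) (m : Fin n ⊕ Fin n →₀ ℕ) :
    coeff m (pois (quadraticPart α) f) = homologicalEigenvalue α m * coeff m f := by
  simp only [pois_eq_sum_pderiv, pderiv_inl_quadraticPart, pderiv_inr_quadraticPart, mul_assoc,
    map_sum, map_sub, coeff_C_mul, coeff_X_mul_pderiv, homologicalEigenvalue, Finset.sum_mul]
  refine Finset.sum_congr rfl fun i _ => ?_
  ring

end QuadraticBracket

section Exponential

variable {n : ℕ} {f H : MvPowerSeries (Fin n ⊕ Fin n) ℂ}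

lemma coeff_expAd_of_ordGe {l : ℕ} (hf : OrdGe f 2) (h2 : OrdGe (adIter f H 2) (l + 1))
    {m : Fin n ⊕ Fin n →₀ ℕ} (hm : mdeg m ≤ l) :
    coeff m (expAd f H) = coeff m H + coeff m (pois H f) := by
  have hiter (j : ℕ) : OrdGe (adIter f H (j + 2)) (l + 1) := by
    induction j with
    | zero => exact h2
    | succ j ih => exact (ih.pois hf).mono (by omega)
  have hsupp : (Function.support fun j : ℕ => ((j.factorial : ℂ))⁻¹ * coeff m (adIter f H j)) ⊆
      ({0, 1} : Finset ℕ) := by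
    intro j hj
    by_contra hj01
    obtain ⟨i, rfl⟩ : ∃ i, j = i + 2 := ⟨j - 2, by simp at hj01; omega⟩
    exact hj (by simp only [hiter i m (by omega), mul_zero])
  have hexpAd : coeff m (expAd f H) =
      ∑ᶠ j : ℕ, ((j.factorial : ℂ))⁻¹ * coeff m (adIter f H j) := rfl
  rw [hexpAd, finsum_eq_sum_of_support_subset _ hsupp, Finset.sum_pair zero_ne_one]
  simp [adIter]

lemma coeff_expAd_of_sub_quadraticPart {α : Fin n → ℂ} {c : ℂ} {l : ℕ} (hl : 3 ≤ l)
    (hH : OrdGe (H - C c - quadraticPart α) 4) (hf : OrdGe f (l + 1))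
    {m : Fin n ⊕ Fin n →₀ ℕ} (hm : mdeg m ≤ l + 2) :
    coeff m (expAd f H) = coeff m H + homologicalEigenvalue α m * coeff m f := by
  have hsplit : H = C c + (quadraticPart α + (H - C c - quadraticPart α)) := by ring
  have hpois : pois H f = pois (quadraticPart α) f + pois (H - C c - quadraticPart α) f := by
    conv_lhs => rw [hsplit]
    rw [pois_C_add_left, pois_add_left]
  have hH2 : OrdGe (pois H f) (l + 1) := by
    rw [hpois]
    exact (((ordGe_quadraticPart α).pois hf).mono (by omega)).add ((hH.pois hf).mono (by omega))
  -- `ad_f² H` has order `≥ 2l ≥ l + 3`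
  rw [coeff_expAd_of_ordGe (hf.mono (by omega)) ((hH2.pois hf).mono (by omega)) hm, hpois,
    map_add, coeff_pois_quadraticPart, (hH.pois hf) m (by omega), add_zero]

end Exponential

section Homological

variable {σ : Type} [Fintype σ]

/-- Where the eigenvalue vanishes, `x / 0 = 0` makes the coefficient zero: those resonant terms
of `R` are collected by `resonantPart` instead. -/
noncomputable def homologicalSolution (α : σ → ℂ) (R : MvPowerSeries (σ ⊕ σ) ℂ) :
    MvPowerSeries (σ ⊕ σ) ℂ :=
  fun m => -coeff m R / homologicalEigenvalue α m

lemma coeff_homologicalSolution (α : σ → ℂ) (R : MvPowerSeries (σ ⊕ σ) ℂ) (m : σ ⊕ σ →₀ ℕ) :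
    coeff m (homologicalSolution α R) = -coeff m R / homologicalEigenvalue α m := rfl

lemma ordGe_homologicalSolution (α : σ → ℂ) {R : MvPowerSeries (σ ⊕ σ) ℂ} {a : ℕ}
    (hR : OrdGe R a) : OrdGe (homologicalSolution α R) a := fun m hm => by
  rw [coeff_homologicalSolution, hR m hm, neg_zero, zero_div]

variable [DecidableEq σ]

noncomputable def resonantPart (d : ℕ) (R : MvPowerSeries (σ ⊕ σ) ℂ) : MvPolynomial σ ℂ :=
  ∑ a ∈ Finset.finsuppAntidiag Finset.univ d, MvPolynomial.monomial a (coeff (a.sumElim a) R)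

lemma coeff_resonantPart (d : ℕ) (R : MvPowerSeries (σ ⊕ σ) ℂ) (a : σ →₀ ℕ) :
    (resonantPart d R).coeff a = if a.degree = d then coeff (a.sumElim a) R else 0 := by
  simp [resonantPart, MvPolynomial.coeff_sum, MvPolynomial.coeff_monomial,
    Finset.mem_finsuppAntidiag, Finsupp.degree_eq_sum]

lemma isHomogeneous_resonantPart (d : ℕ) (R : MvPowerSeries (σ ⊕ σ) ℂ) :
    (resonantPart d R).IsHomogeneous d := by
  intro a ha
  rw [coeff_resonantPart] at ha
  split_ifs at ha with h
  · rw [← h, Finsupp.degree_eq_weight_one]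
    rfl
  · exact absurd rfl ha

lemma coeff_add_homologicalEigenvalue_mul_homologicalSolution {α : σ → ℂ}
    (hα : LinearIndependent ℚ α) {k : ℕ} (hk : Odd k) {R : MvPowerSeries (σ ⊕ σ) ℂ}
    (hR : OrdGe R (k + 1)) {m : σ ⊕ σ →₀ ℕ} (hm : mdeg m ≤ k + 2) :
    coeff m R + homologicalEigenvalue α m * coeff m (homologicalSolution α R) =
      coeff m (MvPolynomial.aeval actionVar (resonantPart ((k + 1) / 2) R)) := by
  by_cases hres : homologicalEigenvalue α m = 0
  · obtain ⟨a, rfl⟩ := (homologicalEigenvalue_eq_zero_iff hα m).mp hres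
    rw [hres, zero_mul, add_zero, coeff_sumElim_self_aeval_actionVar, coeff_resonantPart]
    split_ifs with ha
    · rfl
    · rw [mdeg_eq_degree, degree_sumElim_self] at hm
      -- a resonant monomial has even degree, while `k + 2` is odd
      obtain ⟨t, rfl⟩ := hk
      exact hR _ (by rw [mdeg_eq_degree, degree_sumElim_self]; omega)
  · have hnonres (a : σ →₀ ℕ) : a.sumElim a ≠ m :=
      fun ha => hres ((homologicalEigenvalue_eq_zero_iff hα m).mpr ⟨a, ha⟩)
    rw [coeff_aeval_actionVar_of_forall_ne _ hnonres, coeff_homologicalSolution]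
    field_simp
    ring

end Homological

/-- **Inductive normalization step.** Let `k ≥ 3` be odd, `P ∈ ℂ[X₁,…,Xₙ]` with linear
part `Σᵢ αᵢXᵢ` (`α₁,…,αₙ` linearly independent over ℚ) and
`H = P(q₁p₁,…,qₙpₙ) + o(k)`. Then there are `f` of order ≥ `k+1` and a homogeneous
polynomial `B ∈ ℂ[X₁,…,Xₙ]` of degree `(k+1)/2` with
`e^{ad_f}(H) = (P+B)(q₁p₁,…,qₙpₙ) + o(k+2)`. -/
theorem inductive_normalization_step (n : ℕ) (α : Fin n → ℂ)
    (hα : LinearIndependent ℚ α)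
    (k : ℕ) (hk : 3 ≤ k) (hodd : Odd k)
    (P : MvPolynomial (Fin n) ℂ)
    (hP : ∀ i : Fin n, P.coeff (Finsupp.single i 1) = α i)
    (H : MvPowerSeries (Fin n ⊕ Fin n) ℂ)
    (hH : OEq H (MvPolynomial.aeval
      (fun i : Fin n => (X (Sum.inl i) * X (Sum.inr i) : MvPowerSeries (Fin n ⊕ Fin n) ℂ)) P) k) :
    ∃ (f : MvPowerSeries (Fin n ⊕ Fin n) ℂ) (B : MvPolynomial (Fin n) ℂ),
      OrdGe f (k + 1) ∧ B.IsHomogeneous ((k + 1) / 2) ∧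
      OEq (expAd f H)
        (MvPolynomial.aeval
          (fun i : Fin n => (X (Sum.inl i) * X (Sum.inr i) : MvPowerSeries (Fin n ⊕ Fin n) ℂ))
          (P + B)) (k + 2) := by
  change OEq H (MvPolynomial.aeval actionVar P) k at hH
  set R := H - MvPolynomial.aeval actionVar P with hRdef
  have hR : OrdGe R (k + 1) := fun m hm => hH m (by omega)
  have hH4 : OrdGe (H - C (P.coeff 0) - quadraticPart α) 4 := by
    convert (hR.mono (by omega)).add (ordGe_aeval_actionVar_sub_quadraticPart hP) using 1
    ring
  have hf := ordGe_homologicalSolution α hR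
  refine ⟨homologicalSolution α R, resonantPart ((k + 1) / 2) R, hf,
    isHomogeneous_resonantPart _ _, fun m hm => ?_⟩
  change coeff m (expAd _ H - MvPolynomial.aeval actionVar (P + _)) = 0
  rw [map_sub, coeff_expAd_of_sub_quadraticPart hk hH4 hf hm, map_add, map_add,
    ← coeff_add_homologicalEigenvalue_mul_homologicalSolution hα hodd hR hm, hRdef, map_sub]
  ring
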